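/- Pappus' hexagon theorem: if A, B, C are collinear points and a, b, c are collinear points in a projective plane satisfying Pappus' axiom (e.g. over a field), then the three intersection points G = Ab ∩ aB, H = Ac ∩ aC, I = Bc ∩ bC are collinear. -/

import Mathlib

/-!
Every point involved is an intersection of two lines `PQ` and `RS`, and Cramer's rule gives it
homogeneous coordinates `(lineInterNum P Q R S, lineInterDen P Q R S)` that are polynomial in
`P, Q, R, S`. Writing `C = A + u • (B - A)` and `c = a + v • (b - a)`, the 3 × 3 determinant of
the homogeneous coordinates of `G, H, I` is identically zero as a polynomial in the coordinates of
`A, B, a, b` and in `u, v`; it equals the collinearity determinant of `G, H, I` times the three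
denominators. Non-collinearity of `a, b, A` forces the denominator of `G` to be nonzero. The
denominator of `H` vanishes only when `c = a` and `C = A`, and then `G = I`; symmetrically, that of
`I` vanishes only when `c = b` and `C = B`, and then `G = H`.
-/

namespace Pappus

section Algebra

variable {k : Type*} [CommRing k]

def det2 (x y : Fin 2 → k) : k := x 0 * y 1 - x 1 * y 0

/-- The determinant of the `3 × 3` matrix with rows `(x, dx)`, `(y, dy)`, `(z, dz)`. -/
def homDet (x y z : Fin 2 → k) (dx dy dz : k) : k :=
  dx * det2 y z + dy * det2 z x + dz * det2 x y

def lineInterDen (P Q R S : Fin 2 → k) : k := det2 (Q - P) (S - R)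

/-- Together with `lineInterDen P Q R S`, homogeneous coordinates of the intersection point of
the lines `PQ` and `RS`. -/
def lineInterNum (P Q R S : Fin 2 → k) : Fin 2 → k :=
  lineInterDen P Q R S • P + det2 (R - P) (S - R) • (Q - P)

theorem exists_eq_add_smul_sub_of_mem_affineSpan_pair {X P Q : Fin 2 → k}
    (h : X ∈ line[k, P, Q]) : ∃ t : k, X = P + t • (Q - P) := by
  obtain ⟨t, rfl⟩ := mem_affineSpan_pair_iff_exists_lineMap_eq.1 h
  exact ⟨t, by rw [AffineMap.lineMap_apply_module', add_comm]⟩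

theorem mul_det2_sub_sub_eq_homDet {X Y Z NX NY NZ : Fin 2 → k} {dX dY dZ : k}
    (hX : dX • X = NX) (hY : dY • Y = NY) (hZ : dZ • Z = NZ) :
    dX * dY * dZ * det2 (Y - X) (Z - X) = homDet NX NY NZ dX dY dZ := by
  subst hX hY hZ
  simp only [homDet, det2, Pi.sub_apply, Pi.smul_apply, smul_eq_mul]
  ring

theorem homDet_add_smul (x y z O : Fin 2 → k) (dx dy dz : k) :
    homDet (x + dx • O) (y + dy • O) (z + dz • O) dx dy dz = homDet x y z dx dy dz := by
  simp only [homDet, det2, Pi.add_apply, Pi.smul_apply, smul_eq_mul]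
  ring

theorem lineInterDen_sub (P Q R S O : Fin 2 → k) :
    lineInterDen (P - O) (Q - O) (R - O) (S - O) = lineInterDen P Q R S := by
  simp only [lineInterDen, sub_sub_sub_cancel_right]

theorem lineInterNum_eq_sub_add (P Q R S O : Fin 2 → k) :
    lineInterNum P Q R S =
      lineInterNum (P - O) (Q - O) (R - O) (S - O) + lineInterDen P Q R S • O := by
  simp only [lineInterNum, lineInterDen_sub, sub_sub_sub_cancel_right, smul_sub]
  abel

theorem lineInterDen_swap (P Q R S : Fin 2 → k) :
    lineInterDen R S P Q = -lineInterDen P Q R S := by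
  simp only [lineInterDen, det2]
  ring

theorem lineInterDen_smul_eq_lineInterNum {P Q R S X : Fin 2 → k} (h₁ : X ∈ line[k, P, Q])
    (h₂ : X ∈ line[k, R, S]) : lineInterDen P Q R S • X = lineInterNum P Q R S := by
  obtain ⟨t, rfl⟩ := exists_eq_add_smul_sub_of_mem_affineSpan_pair h₁
  obtain ⟨s, hs⟩ := exists_eq_add_smul_sub_of_mem_affineSpan_pair h₂
  have ht : t * lineInterDen P Q R S = det2 (R - P) (S - R) := by
    have h0 := congrFun hs 0
    have h1 := congrFun hs 1
    simp only [lineInterDen, det2, Pi.add_apply, Pi.sub_apply, Pi.smul_apply, smul_eq_mul]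
      at h0 h1 ⊢
    linear_combination (S 1 - R 1) * h0 - (S 0 - R 0) * h1
  rw [lineInterNum, ← ht, smul_add, smul_smul, mul_comm]

/-- Translating `a` to the origin keeps this identity within reach of `ring`. -/
theorem pappus_identity_at_origin (A B C b c : Fin 2 → k) (u v : k)
    (hC : C = A + u • (B - A)) (hc : c = v • b) :
    homDet (lineInterNum A b 0 B) (lineInterNum A c 0 C) (lineInterNum B c b C)
      (lineInterDen A b 0 B) (lineInterDen A c 0 C) (lineInterDen B c b C) = 0 := by
  subst hC hc
  simp only [homDet, lineInterNum, lineInterDen, det2, Pi.add_apply, Pi.sub_apply,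
    Pi.smul_apply, Pi.zero_apply, smul_eq_mul]
  ring

theorem pappus_identity {A B C a b c : Fin 2 → k} (hC : C ∈ line[k, A, B])
    (hc : c ∈ line[k, a, b]) :
    homDet (lineInterNum A b a B) (lineInterNum A c a C) (lineInterNum B c b C)
      (lineInterDen A b a B) (lineInterDen A c a C) (lineInterDen B c b C) = 0 := by
  obtain ⟨u, hC⟩ := exists_eq_add_smul_sub_of_mem_affineSpan_pair hC
  obtain ⟨v, hc⟩ := exists_eq_add_smul_sub_of_mem_affineSpan_pair hc
  rw [lineInterNum_eq_sub_add A b a B a, lineInterNum_eq_sub_add A c a C a,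
    lineInterNum_eq_sub_add B c b C a, homDet_add_smul, ← lineInterDen_sub A b a B a,
    ← lineInterDen_sub A c a C a, ← lineInterDen_sub B c b C a, sub_self]
  exact pappus_identity_at_origin _ _ _ _ _ u v (by rw [hC]; module) (by rw [hc]; module)

end Algebra

section Geometry

theorem eq_of_mem_affineSpan_pair_of_collinear {k V P : Type*} [Field k] [AddCommGroup V]
    [Module k V] [AddTorsor V P] {a b c A : P} (hc : c ∈ line[k, a, b])
    (h : Collinear k {A, c, a}) (hA : ¬Collinear k {a, b, A}) : c = a := by
  by_contra hca
  have hA' : A ∈ line[k, c, a] := h.mem_affineSpan_of_mem_of_ne (by simp) (by simp) (by simp) hca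
  have hle : line[k, c, a] ≤ line[k, a, b] :=
    affineSpan_pair_le_of_mem_of_mem hc (left_mem_affineSpan_pair _ _ _)
  exact hA (collinear_triple_of_mem_affineSpan_pair (left_mem_affineSpan_pair _ _ _)
    (right_mem_affineSpan_pair _ _ _) (hle hA'))

variable {k : Type*} [Field k]

theorem collinear_of_det2_eq_zero {P Q R : Fin 2 → k} (h : det2 (Q - P) (R - P) = 0) :
    Collinear k {P, Q, R} := by
  obtain ⟨w, hw, hwM⟩ := (Matrix.exists_vecMul_eq_zero_iff (M := Matrix.of ![Q - P, R - P])).2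
    (by simpa [Matrix.det_fin_two, det2] using h)
  have hdep : w 0 • (Q - P) + w 1 • (R - P) = 0 := by
    rw [← hwM]
    ext i
    simp [Matrix.vecMul, dotProduct, Fin.sum_univ_two, mul_comm]
  rw [collinear_iff_not_affineIndependent_set, affineIndependent_iff]
  intro hind
  have hw_zero := hind Finset.univ ![-(w 0 + w 1), w 0, w 1] (by simp [Fin.sum_univ_three]) <| by
    rw [Fin.sum_univ_three, ← hdep]
    simp only [Matrix.cons_val_zero, Matrix.cons_val_one, Matrix.cons_val_two, Matrix.head_cons,
      Matrix.tail_cons]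
    module
  apply hw
  ext i
  fin_cases i
  · simpa using hw_zero 1
  · simpa using hw_zero 2

theorem collinear_of_lineInterDen_eq_zero {P Q R S X : Fin 2 → k} (h₁ : X ∈ line[k, P, Q])
    (h₂ : X ∈ line[k, R, S]) (hd : lineInterDen P Q R S = 0) : Collinear k {P, Q, R} := by
  obtain ⟨t, rfl⟩ := exists_eq_add_smul_sub_of_mem_affineSpan_pair h₁
  obtain ⟨s, hs⟩ := exists_eq_add_smul_sub_of_mem_affineSpan_pair h₂
  apply collinear_of_det2_eq_zero
  have h0 := congrFun hs 0
  have h1 := congrFun hs 1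
  simp only [lineInterDen, det2, Pi.add_apply, Pi.sub_apply, Pi.smul_apply, smul_eq_mul]
    at h0 h1 hd ⊢
  linear_combination (-s) * hd + (Q 1 - P 1) * h0 - (Q 0 - P 0) * h1

theorem eq_of_mem_affineSpan_pair_of_lineInterDen_ne_zero {P Q R S X Y : Fin 2 → k}
    (hX₁ : X ∈ line[k, P, Q]) (hX₂ : X ∈ line[k, R, S]) (hY₁ : Y ∈ line[k, P, Q])
    (hY₂ : Y ∈ line[k, R, S]) (hd : lineInterDen P Q R S ≠ 0) : X = Y :=
  smul_right_injective _ hd <| (lineInterDen_smul_eq_lineInterNum hX₁ hX₂).trans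
    (lineInterDen_smul_eq_lineInterNum hY₁ hY₂).symm

theorem eq_and_eq_of_lineInterDen_eq_zero {A B C a b c X : Fin 2 → k}
    (hC : C ∈ line[k, A, B]) (hc : c ∈ line[k, a, b]) (hX₁ : X ∈ line[k, A, c])
    (hX₂ : X ∈ line[k, a, C]) (ha : ¬Collinear k {A, B, a}) (hA : ¬Collinear k {a, b, A})
    (hd : lineInterDen A c a C = 0) : c = a ∧ C = A :=
  ⟨eq_of_mem_affineSpan_pair_of_collinear hc (collinear_of_lineInterDen_eq_zero hX₁ hX₂ hd) hA,
    eq_of_mem_affineSpan_pair_of_collinear hC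
      (collinear_of_lineInterDen_eq_zero hX₂ hX₁ (by rw [lineInterDen_swap, hd, neg_zero])) ha⟩

end Geometry

end Pappus

open Pappus

theorem stmt5_general {k : Type*} [Field k]
    (A B C a b c G H I : Fin 2 → k)
    (hABC : Collinear k {A, B, C}) (habc : Collinear k {a, b, c})
    (ha : ¬ Collinear k {A, B, a}) (hb : ¬ Collinear k {A, B, b})
    (hA : ¬ Collinear k {a, b, A}) (hB : ¬ Collinear k {a, b, B})
    (hG₁ : G ∈ affineSpan k {A, b}) (hG₂ : G ∈ affineSpan k {a, B})
    (hH₁ : H ∈ affineSpan k {A, c}) (hH₂ : H ∈ affineSpan k {a, C})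
    (hI₁ : I ∈ affineSpan k {B, c}) (hI₂ : I ∈ affineSpan k {b, C}) :
    Collinear k {G, H, I} := by
  have hCAB : C ∈ line[k, A, B] :=
    hABC.mem_affineSpan_of_mem_of_ne (by simp) (by simp) (by simp) (ne₁₂_of_not_collinear ha)
  have hcab : c ∈ line[k, a, b] :=
    habc.mem_affineSpan_of_mem_of_ne (by simp) (by simp) (by simp) (ne₁₂_of_not_collinear hA)
  have hGd : lineInterDen A b a B ≠ 0 := fun hd => hA <| by
    have h := collinear_of_lineInterDen_eq_zero hG₁ hG₂ hd
    rwa [Set.insert_comm A b, Set.pair_comm A a, Set.insert_comm b a] at h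
  by_cases hHd : lineInterDen A c a C = 0
  · obtain ⟨hca, hCA⟩ := eq_and_eq_of_lineInterDen_eq_zero hCAB hcab hH₁ hH₂ ha hA hHd
    subst c C
    rw [Set.pair_comm] at hI₁ hI₂
    obtain rfl : I = G := eq_of_mem_affineSpan_pair_of_lineInterDen_ne_zero hI₂ hI₁ hG₁ hG₂ hGd
    rw [Set.pair_comm, Set.insert_idem]
    exact collinear_pair k I H
  by_cases hId : lineInterDen B c b C = 0
  · rw [Set.pair_comm] at hcab hCAB
    rw [Set.insert_comm] at hB hb
    obtain ⟨hcb, hCB⟩ := eq_and_eq_of_lineInterDen_eq_zero hCAB hcab hI₁ hI₂ hb hB hId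
    subst c C
    obtain rfl : H = G := eq_of_mem_affineSpan_pair_of_lineInterDen_ne_zero hH₁ hH₂ hG₁ hG₂ hGd
    rw [Set.insert_idem]
    exact collinear_pair k H I
  apply collinear_of_det2_eq_zero
  have key := mul_det2_sub_sub_eq_homDet (lineInterDen_smul_eq_lineInterNum hG₁ hG₂)
    (lineInterDen_smul_eq_lineInterNum hH₁ hH₂) (lineInterDen_smul_eq_lineInterNum hI₁ hI₂)
  rw [pappus_identity hCAB hcab] at key
  exact (mul_eq_zero.1 key).resolve_left (mul_ne_zero (mul_ne_zero hGd hHd) hId)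

/-- **Pappus' hexagon theorem** (affine version over a field).  Let `A, B, C`
be collinear and `a, b, c` be collinear in the plane `k²`, in non-degenerate
position: none of `a, b, c` lies on the line `AB` and none of `A, B, C` lies
on the line `ab`.  If `G` lies on both lines `Ab` and `aB`, `H` lies on both
lines `Ac` and `aC`, and `I` lies on both lines `Bc` and `bC`, then `G, H, I`
are collinear. -/
theorem stmt5 {k : Type*} [Field k]
    (A B C a b c G H I : Fin 2 → k)
    (hABC : Collinear k {A, B, C}) (habc : Collinear k {a, b, c})
    (ha : ¬ Collinear k {A, B, a}) (hb : ¬ Collinear k {A, B, b})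
    (hc : ¬ Collinear k {A, B, c})
    (hA : ¬ Collinear k {a, b, A}) (hB : ¬ Collinear k {a, b, B})
    (hC : ¬ Collinear k {a, b, C})
    (hG₁ : G ∈ affineSpan k {A, b}) (hG₂ : G ∈ affineSpan k {a, B})
    (hH₁ : H ∈ affineSpan k {A, c}) (hH₂ : H ∈ affineSpan k {a, C})
    (hI₁ : I ∈ affineSpan k {B, c}) (hI₂ : I ∈ affineSpan k {b, C}) :
    Collinear k {G, H, I} :=
  stmt5_general A B C a b c G H I hABC habc ha hb hA hB hG₁ hG₂ hH₁ hH₂ hI₁ hI₂
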